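/- arXiv:2403.20258 — 3 statements merged into one kernel-verified Lean document; each statement's English description precedes it below -/
import Mathlib

section
/- Let W be a standard one-dimensional Brownian motion on a probability space (Ω, F, P). Then for every T > 0 and every a > 0, the probability that the running supremum of W stays below the level a over [0, T] equals the Gauss error function evaluated at a/√(2T); that is, P( sup_{0 ≤ t ≤ T} W_t < a ) = erf( a / √(2T) ). -/
open MeasureTheory ProbabilityTheory

/-- The Gauss error function `erf z = (2/√π) ∫₀^z e^{-u²} du`. -/
noncomputable def erf (z : ℝ) : ℝ :=
  (2 / Real.sqrt Real.pi) * ∫ u in (0:ℝ)..z, Real.exp (-u ^ 2)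

/-- A standard one-dimensional Brownian motion on a probability space `(Ω, F, P)`:
`W₀ = 0` a.s., a.e. sample path is continuous on `[0,∞)`, `W` has independent
increments, and for `0 ≤ s ≤ t` the increment `W_t - W_s` has law `N(0, t - s)`. -/
structure IsStdBrownianMotion {Ω : Type*} [MeasurableSpace Ω] (P : Measure Ω)
    (W : ℝ → Ω → ℝ) : Prop where
  meas : ∀ t : ℝ, Measurable (W t)
  init : ∀ᵐ ω ∂P, W 0 ω = 0
  cont : ∀ᵐ ω ∂P, ContinuousOn (fun t => W t ω) (Set.Ici (0:ℝ))
  indep_incr : ∀ (n : ℕ) (t : Fin (n + 1) → ℝ), (∀ i, 0 ≤ t i) → Monotone t →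
    iIndepFun
      (fun (i : Fin n) (ω : Ω) => W (t i.succ) ω - W (t i.castSucc) ω) P
  gauss_incr : ∀ s t : ℝ, 0 ≤ s → s ≤ t →
    P.map (fun ω => W t ω - W s ω) = gaussianReal 0 (Real.toNNReal (t - s))

/-!
Reflection principle on dyadic grids. Sampled at the times `j T / 2^k`, the Brownian path is a
random walk with independent symmetric Gaussian increments. Reflecting the walk after its first
passage above `x` gives `P(max_j S_j ≥ x) ≤ P(S_n ≥ x) + P(S_n > x)`, and the same reflection
gives the reverse inequality up to the overshoot at the first passage, which is at most one
increment and hence small by a Gaussian tail bound on the `2^k` increments. As the grids increase,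
`P(W reaches x at a dyadic time of [0, T]) = 2 P(W_T > x) = 1 - erf(x / √(2T))`. By continuity of
the paths, `sup_{[0,T]} W ≥ a` a.s. implies a dyadic crossing of every `y < a` and is implied by
a dyadic crossing of `a`; continuity of `erf` in the level closes the squeeze.
-/

open Set Filter
open scoped ENNReal NNReal Topology Function Real

section Gaussian

variable {v : ℝ≥0}

lemma continuous_erf : Continuous erf :=
  continuous_const.mul <| intervalIntegral.continuous_primitive
    (fun _ _ => (by fun_prop : Continuous fun u : ℝ => Real.exp (-u ^ 2)).intervalIntegrable _ _) 0

lemma isNegInvariant_gaussianReal (v : ℝ≥0) : (gaussianReal 0 v).IsNegInvariant :=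
  ⟨by rw [Measure.neg_def]; simpa using gaussianReal_map_neg (μ := 0) (v := v)⟩

lemma hasSubgaussianMGF_id_gaussianReal (v : ℝ≥0) : HasSubgaussianMGF id v (gaussianReal 0 v) :=
  ⟨integrable_exp_mul_gaussianReal, fun t => by simp [mgf_id_gaussianReal]⟩

lemma gaussianReal_Ici (hv : v ≠ 0) (a : ℝ) : gaussianReal 0 v (Ici a) = gaussianReal 0 v (Ioi a) :=
  have := nullSingletonClass_gaussianReal (μ := 0) hv
  measure_congr Ioi_ae_eq_Ici.symm

lemma intervalIntegral_neg_self_exp_neg_sq (z : ℝ) :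
    ∫ u in -z..z, Real.exp (-u ^ 2) = 2 * ∫ u in (0 : ℝ)..z, Real.exp (-u ^ 2) := by
  have h_int : ∀ a b : ℝ, IntervalIntegrable (fun u => Real.exp (-u ^ 2)) volume a b :=
    fun a b => (by fun_prop : Continuous fun u : ℝ => Real.exp (-u ^ 2)).intervalIntegrable a b
  rw [← intervalIntegral.integral_add_adjacent_intervals (h_int _ 0) (h_int 0 _), two_mul]
  congr 1
  have h := intervalIntegral.integral_comp_neg (a := 0) (b := z) (fun u => Real.exp (-u ^ 2))
  simp only [neg_zero, even_two, Even.neg_pow] at h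
  exact h.symm

lemma gaussianReal_Icc_neg (hv : v ≠ 0) {a : ℝ} (ha : 0 ≤ a) :
    gaussianReal 0 v (Icc (-a) a) = ENNReal.ofReal (erf (a / √(2 * v))) := by
  have hs : 0 < √(2 * v) := Real.sqrt_pos.2 (by positivity)
  -- the substitution `x = √(2v) u` turns the Gaussian density into `e^{-u²}/√π`
  have h_pdf : ∀ x, gaussianPDFReal 0 v x = (√(2 * π * v))⁻¹ * Real.exp (-(x / √(2 * v)) ^ 2) := by
    intro x
    rw [gaussianPDFReal, div_pow, Real.sq_sqrt (by positivity)]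
    ring_nf
  rw [gaussianReal_apply_eq_integral 0 hv, integral_Icc_eq_integral_Ioc,
    ← intervalIntegral.integral_of_le (by linarith), erf]
  congr 1
  simp_rw [h_pdf]
  rw [intervalIntegral.integral_comp_div (fun u => (√(2 * π * v))⁻¹ * Real.exp (-u ^ 2)) hs.ne',
    intervalIntegral.integral_const_mul, neg_div, intervalIntegral_neg_self_exp_neg_sq, smul_eq_mul]
  have : √(2 * π * v) = √π * √(2 * v) := by
    rw [← Real.sqrt_mul Real.pi_pos.le]; ring_nf
  rw [this]
  field_simp

lemma gaussianReal_Icc_neg_add_two_mul_Ioi {a : ℝ} (ha : 0 ≤ a) :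
    gaussianReal 0 v (Icc (-a) a) + 2 * gaussianReal 0 v (Ioi a) = 1 := by
  have h_symm : gaussianReal 0 v (Iio (-a)) = gaussianReal 0 v (Ioi a) := by
    conv_lhs => rw [← (isNegInvariant_gaussianReal v).neg_eq_self]
    rw [Measure.neg_apply, neg_Iio, neg_neg]
  have h_compl : (Icc (-a) a)ᶜ = Iio (-a) ∪ Ioi a := by
    ext y
    simp only [mem_compl_iff, mem_Icc, mem_union, mem_Iio, mem_Ioi, not_and_or, not_le]
  rw [← measure_univ (μ := gaussianReal 0 v), ← measure_add_measure_compl measurableSet_Icc,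
    h_compl, measure_union (Iio_disjoint_Ioi_of_le (by linarith)) measurableSet_Ioi, h_symm,
    two_mul]

lemma two_mul_gaussianReal_Ioi (hv : v ≠ 0) {a : ℝ} (ha : 0 ≤ a) :
    2 * gaussianReal 0 v (Ioi a) = 1 - ENNReal.ofReal (erf (a / √(2 * v))) :=
  ENNReal.eq_sub_of_add_eq ENNReal.ofReal_ne_top <| by
    rw [add_comm, ← gaussianReal_Icc_neg hv ha, gaussianReal_Icc_neg_add_two_mul_Ioi ha]

end Gaussian

section RandomWalk

variable {Ω : Type*} {X : ℕ → Ω → ℝ} {n j : ℕ} {x ε : ℝ}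

lemma ProbabilityTheory.IndepFun.map_prodMk_neg_eq {γ : Type*} [MeasurableSpace Ω]
    [MeasurableSpace γ] {P : Measure Ω} [IsFiniteMeasure P] {G : Ω → γ} {D : Ω → ℝ}
    (h : IndepFun G D P) (hG : Measurable G) (hD : Measurable D)
    (hD_symm : (P.map D).IsNegInvariant) :
    P.map (fun ω => (G ω, -D ω)) = P.map (fun ω => (G ω, D ω)) := by
  change P.map (fun ω => (G ω, (-D) ω)) = _
  rw [(indepFun_iff_map_prod_eq_prod_map_map hG.aemeasurable hD.neg.aemeasurable).1 h.neg_right,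
    (indepFun_iff_map_prod_eq_prod_map_map hG.aemeasurable hD.aemeasurable).1 h,
    show -D = Neg.neg ∘ D from rfl, ← Measure.map_map measurable_neg hD, ← Measure.neg_def,
    Measure.neg_eq_self]

def partialSum (X : ℕ → Ω → ℝ) (j : ℕ) (ω : Ω) : ℝ := ∑ i ∈ Finset.range j, X i ω

def levelCrossing (X : ℕ → Ω → ℝ) (x : ℝ) (n : ℕ) : Set Ω :=
  {ω | ∃ j ≤ n, x ≤ partialSum X j ω}

def firstPassage (X : ℕ → Ω → ℝ) (x : ℝ) (j : ℕ) : Set Ω :=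
  {ω | x ≤ partialSum X j ω ∧ ∀ l < j, partialSum X l ω < x}

lemma pairwise_disjoint_firstPassage : Pairwise (Disjoint on firstPassage X x) :=
  (pairwise_disjoint_on _).2 fun i _ hij =>
    Set.disjoint_left.2 fun _ hi hj => (hj.2 i hij).not_ge hi.1

lemma biUnion_firstPassage : ⋃ j ∈ Finset.Iic n, firstPassage X x j = levelCrossing X x n := by
  classical
  ext ω
  simp only [mem_iUnion, Finset.mem_Iic, exists_prop, levelCrossing, mem_ofPred_eq]
  constructor
  · rintro ⟨j, hj, hω⟩
    exact ⟨j, hj, hω.1⟩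
  · rintro ⟨j, hj, hω⟩
    have hex : ∃ m, x ≤ partialSum X m ω := ⟨j, hω⟩
    exact ⟨Nat.find hex, (Nat.find_min' hex hω).trans hj, Nat.find_spec hex,
      fun l hl => not_le.1 (Nat.find_min hex hl)⟩

variable [MeasurableSpace Ω] {P : Measure Ω}

lemma measurable_partialSum (hX : ∀ i, Measurable (X i)) (j : ℕ) : Measurable (partialSum X j) :=
  Finset.measurable_sum _ fun i _ => hX i

lemma measurableSet_firstPassage (hX : ∀ i, Measurable (X i)) (x : ℝ) (j : ℕ) :
    MeasurableSet (firstPassage X x j) := by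
  simp only [firstPassage, ofPred_and, ofPred_forall]
  exact (measurableSet_le measurable_const (measurable_partialSum hX j)).inter
    (.iInter fun l => .iInter fun _ =>
      measurableSet_lt (measurable_partialSum hX l) measurable_const)

lemma measurableSet_levelCrossing (hX : ∀ i, Measurable (X i)) (x : ℝ) (n : ℕ) :
    MeasurableSet (levelCrossing X x n) :=
  biUnion_firstPassage ▸ Finset.measurableSet_biUnion _ fun j _ => measurableSet_firstPassage hX x j

lemma measure_levelCrossing_inter {C : Set Ω} (hX : ∀ i, Measurable (X i)) (hC : MeasurableSet C) :
    P (levelCrossing X x n ∩ C) = ∑ j ∈ Finset.Iic n, P (firstPassage X x j ∩ C) := by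
  rw [← biUnion_firstPassage, iUnion₂_inter]
  exact measure_biUnion_finset
    (fun i _ j _ hij =>
      (pairwise_disjoint_firstPassage hij).mono inter_subset_left inter_subset_left)
    fun j _ => (measurableSet_firstPassage hX x j).inter hC

lemma measure_levelCrossing (hX : ∀ i, Measurable (X i)) :
    P (levelCrossing X x n) = ∑ j ∈ Finset.Iic n, P (firstPassage X x j) := by
  simpa using measure_levelCrossing_inter (P := P) (x := x) (n := n) hX .univ

lemma indepFun_partialSums_tail (hX : ∀ i, Measurable (X i))
    (hind : iIndepFun (fun i : Fin n => X i) P) (hj : j ≤ n) :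
    IndepFun (fun ω (l : Fin (j + 1)) => partialSum X l ω)
      (fun ω => partialSum X n ω - partialSum X j ω) P := by
  let m : Fin n → MeasurableSpace Ω := fun i => MeasurableSpace.comap (X i) inferInstance
  let past := ⨆ i ∈ {i : Fin n | (i : ℕ) < j}, m i
  have h_indep := indep_iSup_of_disjoint (m := m) (fun i => (hX i).comap_le)
    ((iIndepFun_iff_iIndep _ (fun i : Fin n => X i) _).1 hind)
    (S := {i | (i : ℕ) < j}) (T := {i | j ≤ (i : ℕ)})
    (Set.disjoint_left.2 fun i (hi : (i : ℕ) < j) (hi' : j ≤ (i : ℕ)) => hi'.not_gt hi)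
  have h_meas : ∀ (s : Set (Fin n)) (i : ℕ) (hi : i < n), ⟨i, hi⟩ ∈ s →
      Measurable[⨆ k ∈ s, m k] (X i) := fun s i hi h =>
    Measurable.of_comap_le (le_iSup₂ (f := fun k (_ : k ∈ s) => m k) ⟨i, hi⟩ h)
  rw [IndepFun_iff_Indep]
  refine indep_of_indep_of_le_right (indep_of_indep_of_le_left h_indep ?_) ?_
  · refine Measurable.comap_le ((@measurable_pi_iff _ _ _ past _ _).2 fun l => ?_)
    refine Finset.measurable_sum _ fun i hi => ?_
    rw [Finset.mem_range] at hi
    exact h_meas _ i (by omega) (show i < j by omega)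
  · have h_tail : (fun ω => partialSum X n ω - partialSum X j ω)
        = fun ω => ∑ i ∈ Finset.Ico j n, X i ω :=
      funext fun ω => (Finset.sum_Ico_eq_sub _ hj).symm
    rw [h_tail]
    refine Measurable.comap_le (Finset.measurable_sum _ fun i hi => ?_)
    rw [Finset.mem_Ico] at hi
    exact h_meas _ i hi.2 hi.1

variable [IsFiniteMeasure P]

/-- Reflecting the walk after its first passage at step `j`, which is legitimate because the
increments after `j` are independent of the past and symmetric, exchanges `S_n < x` with
`S_n > 2 S_j - x`. -/
lemma measure_firstPassage_eq (hX : ∀ i, Measurable (X i))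
    (hind : iIndepFun (fun i : Fin n => X i) P) (hj : j ≤ n)
    (h_symm : (P.map fun ω => partialSum X n ω - partialSum X j ω).IsNegInvariant) :
    P (firstPassage X x j) = P (firstPassage X x j ∩ {ω | x ≤ partialSum X n ω})
      + P (firstPassage X x j ∩ {ω | 2 * partialSum X j ω - x < partialSum X n ω}) := by
  set G : Ω → Fin (j + 1) → ℝ := fun ω l => partialSum X l ω
  set D : Ω → ℝ := fun ω => partialSum X n ω - partialSum X j ω
  have hG : Measurable G := measurable_pi_iff.2 fun l => measurable_partialSum hX l
  have hD : Measurable D := (measurable_partialSum hX n).sub (measurable_partialSum hX j)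
  let B : Set ((Fin (j + 1) → ℝ) × ℝ) := {p | x ≤ p.1 (Fin.last j)} ∩
    (⋂ l : Fin j, {p | p.1 l.castSucc < x}) ∩ {p | p.1 (Fin.last j) + p.2 < x}
  have hB : MeasurableSet B :=
    ((measurableSet_le measurable_const (by fun_prop)).inter
      (.iInter fun l => measurableSet_lt (by fun_prop) measurable_const)).inter
      (measurableSet_lt (by fun_prop) measurable_const)
  have h_pre : ∀ d : Ω → ℝ, (fun ω => (G ω, d ω)) ⁻¹' B
      = firstPassage X x j ∩ {ω | partialSum X j ω + d ω < x} := by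
    intro d
    ext ω
    simp [B, G, firstPassage, Fin.forall_iff, and_assoc]
  have h_lt : firstPassage X x j \ {ω | x ≤ partialSum X n ω} = (fun ω => (G ω, D ω)) ⁻¹' B := by
    rw [h_pre]
    ext ω
    simp [D]
  have h_gt : firstPassage X x j ∩ {ω | 2 * partialSum X j ω - x < partialSum X n ω}
      = (fun ω => (G ω, -D ω)) ⁻¹' B := by
    rw [h_pre]
    ext ω
    simp only [mem_inter_iff, mem_ofPred_eq, D]
    constructor <;> exact fun h => ⟨h.1, by linarith [h.2]⟩
  have hGD : Measurable fun ω => (G ω, D ω) := hG.prodMk hD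
  have hGD' : Measurable fun ω => (G ω, -D ω) := hG.prodMk hD.neg
  rw [← measure_inter_add_sdiff (firstPassage X x j)
      (measurableSet_le measurable_const (measurable_partialSum hX n)),
    h_lt, h_gt, ← Measure.map_apply hGD hB, ← Measure.map_apply hGD' hB,
    (indepFun_partialSums_tail hX hind hj).map_prodMk_neg_eq hG hD h_symm]

lemma measure_firstPassage_le (hX : ∀ i, Measurable (X i))
    (hind : iIndepFun (fun i : Fin n => X i) P) (hj : j ≤ n)
    (h_symm : (P.map fun ω => partialSum X n ω - partialSum X j ω).IsNegInvariant) :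
    P (firstPassage X x j) ≤ P (firstPassage X x j ∩ {ω | x ≤ partialSum X n ω})
      + P (firstPassage X x j ∩ {ω | x < partialSum X n ω}) := by
  rw [measure_firstPassage_eq hX hind hj h_symm]
  refine add_le_add_right (measure_mono (μ := P) ?_) _
  rintro ω ⟨hA, h⟩
  -- on the first passage `x ≤ S_j`, hence `x ≤ 2 S_j - x`
  exact ⟨hA, show x < partialSum X n ω by
    linarith [hA.1, show 2 * partialSum X j ω - x < partialSum X n ω from h]⟩

lemma le_measure_firstPassage (hx : 0 < x) (hX : ∀ i, Measurable (X i))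
    (hind : iIndepFun (fun i : Fin n => X i) P) (hj : j ≤ n)
    (h_symm : (P.map fun ω => partialSum X n ω - partialSum X j ω).IsNegInvariant) :
    P (firstPassage X x j ∩ {ω | x ≤ partialSum X n ω}) + P (firstPassage X x j ∩
      {ω | x + 2 * ε < partialSum X n ω ∧ ∀ i < n, X i ω < ε}) ≤ P (firstPassage X x j) := by
  rw [measure_firstPassage_eq hX hind hj h_symm]
  refine add_le_add_right (measure_mono (μ := P) ?_) _
  rintro ω ⟨hA, hS, h_inc⟩
  refine ⟨hA, ?_⟩
  -- the overshoot `S_j - x` at the first passage is at most the last increment, so below `ε`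
  obtain _ | m := j
  · exact absurd hA.1 (by simp [partialSum, hx])
  have h_sum : partialSum X (m + 1) ω = partialSum X m ω + X m ω := Finset.sum_range_succ _ _
  exact (show 2 * partialSum X (m + 1) ω - x < partialSum X n ω by
    linarith [hA.2 m m.lt_succ_self, h_inc m hj])

lemma measure_levelCrossing_le (hX : ∀ i, Measurable (X i))
    (hind : iIndepFun (fun i : Fin n => X i) P)
    (h_symm : ∀ j ≤ n, (P.map fun ω => partialSum X n ω - partialSum X j ω).IsNegInvariant) :
    P (levelCrossing X x n)
      ≤ P.map (partialSum X n) (Ici x) + P.map (partialSum X n) (Ioi x) := by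
  have hS := measurable_partialSum hX n
  rw [Measure.map_apply hS measurableSet_Ici, Measure.map_apply hS measurableSet_Ioi,
    measure_levelCrossing hX]
  refine (Finset.sum_le_sum fun j hj =>
    measure_firstPassage_le hX hind (Finset.mem_Iic.1 hj) (h_symm j (Finset.mem_Iic.1 hj))).trans ?_
  rw [Finset.sum_add_distrib,
    ← measure_levelCrossing_inter hX (measurableSet_le measurable_const hS),
    ← measure_levelCrossing_inter hX (measurableSet_lt measurable_const hS)]
  gcongr <;> exact inter_subset_right

lemma le_measure_levelCrossing_add (hx : 0 < x) (hε : 0 ≤ ε) (hX : ∀ i, Measurable (X i))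
    (hind : iIndepFun (fun i : Fin n => X i) P)
    (h_symm : ∀ j ≤ n, (P.map fun ω => partialSum X n ω - partialSum X j ω).IsNegInvariant) :
    P.map (partialSum X n) (Ici x) + P.map (partialSum X n) (Ioi (x + 2 * ε))
      ≤ P (levelCrossing X x n) + P {ω | ∃ i < n, ε ≤ X i ω} := by
  set E := {ω | x + 2 * ε < partialSum X n ω ∧ ∀ i < n, X i ω < ε}
  have hS := measurable_partialSum hX n
  have hE : MeasurableSet E := by
    simp only [E, ofPred_and, ofPred_forall]
    exact (measurableSet_lt measurable_const hS).inter
      (.iInter fun i => .iInter fun _ => measurableSet_lt (hX i) measurable_const)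
  have h_sub : ∀ {C : Set Ω}, C ⊆ {ω | x ≤ partialSum X n ω} → levelCrossing X x n ∩ C = C :=
    fun hC => inter_eq_right.2 fun ω hω => ⟨n, le_rfl, hC hω⟩
  have hE_sub : E ⊆ {ω | x ≤ partialSum X n ω} := fun ω hω =>
    show x ≤ partialSum X n ω by linarith [hω.1]
  rw [Measure.map_apply hS measurableSet_Ici, Measure.map_apply hS measurableSet_Ioi]
  calc P {ω | x ≤ partialSum X n ω} + P {ω | x + 2 * ε < partialSum X n ω}
      ≤ P (levelCrossing X x n ∩ {ω | x ≤ partialSum X n ω})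
        + (P (levelCrossing X x n ∩ E) + P {ω | ∃ i < n, ε ≤ X i ω}) := by
        rw [h_sub subset_rfl, h_sub hE_sub]
        gcongr
        refine (measure_mono fun ω hω => ?_).trans (measure_union_le _ _)
        by_cases h : ∃ i < n, ε ≤ X i ω
        · exact Or.inr h
        · exact Or.inl ⟨hω, fun i hi => not_le.1 fun h' => h ⟨i, hi, h'⟩⟩
    _ ≤ P (levelCrossing X x n) + P {ω | ∃ i < n, ε ≤ X i ω} := by
      rw [measure_levelCrossing_inter hX (measurableSet_le measurable_const hS),
        measure_levelCrossing_inter hX hE, ← add_assoc, ← Finset.sum_add_distrib,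
        measure_levelCrossing hX]
      exact add_le_add_left (Finset.sum_le_sum fun j hj =>
        le_measure_firstPassage hx hX hind (Finset.mem_Iic.1 hj) (h_symm j (Finset.mem_Iic.1 hj))) _

end RandomWalk

section Brownian

variable {Ω : Type*} {W : ℝ → Ω → ℝ} {T x : ℝ} {k : ℕ}

noncomputable def dyadicIncrement (W : ℝ → Ω → ℝ) (T : ℝ) (k i : ℕ) (ω : Ω) : ℝ :=
  W ((i + 1) * T / 2 ^ k) ω - W (i * T / 2 ^ k) ω

lemma partialSum_dyadicIncrement (j : ℕ) (ω : Ω) :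
    partialSum (dyadicIncrement W T k) j ω = W (j * T / 2 ^ k) ω - W 0 ω := by
  simpa [partialSum, dyadicIncrement] using
    Finset.sum_range_sub (fun m : ℕ => W (m * T / 2 ^ k) ω) j

lemma partialSum_dyadicIncrement_two_pow (ω : Ω) :
    partialSum (dyadicIncrement W T k) (2 ^ k) ω = W T ω - W 0 ω := by
  rw [partialSum_dyadicIncrement, Nat.cast_pow, Nat.cast_ofNat,
    mul_div_cancel_left₀ _ (by positivity)]

lemma dyadic_mem_Icc (hT : 0 ≤ T) {j : ℕ} (hj : j ≤ 2 ^ k) : (j * T / 2 ^ k : ℝ) ∈ Icc 0 T := by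
  refine ⟨by positivity, div_le_of_le_mul₀ (by positivity) hT ?_⟩
  rw [mul_comm]
  gcongr
  exact_mod_cast hj

def dyadicCrossing (W : ℝ → Ω → ℝ) (T x : ℝ) (k : ℕ) : Set Ω :=
  {ω | ∃ j : ℕ, j ≤ 2 ^ k ∧ x ≤ W (j * T / 2 ^ k) ω - W 0 ω}

lemma dyadicCrossing_eq_levelCrossing :
    dyadicCrossing W T x k = levelCrossing (dyadicIncrement W T k) x (2 ^ k) := by
  simp only [dyadicCrossing, levelCrossing, partialSum_dyadicIncrement]

lemma monotone_dyadicCrossing : Monotone (dyadicCrossing W T x) := by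
  refine monotone_nat_of_le_succ fun k ω ⟨j, hj, hω⟩ => ⟨2 * j, by rw [pow_succ]; omega, ?_⟩
  have h_same : ((2 * j : ℕ) : ℝ) * T / 2 ^ (k + 1) = j * T / 2 ^ k := by
    push_cast
    rw [pow_succ]
    field_simp
  rwa [h_same]

lemma le_iSup_of_mem_iUnion_dyadicCrossing (hT : 0 ≤ T) {ω : Ω} (h0 : W 0 ω = 0)
    (hc : ContinuousOn (fun t => W t ω) (Icc 0 T)) (h : ω ∈ ⋃ k, dyadicCrossing W T x k) :
    x ≤ ⨆ t : Icc (0 : ℝ) T, W t ω := by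
  obtain ⟨k, j, hj, hx⟩ := mem_iUnion.1 h
  have h_bdd : BddAbove (range fun t : Icc (0 : ℝ) T => W t ω) := by
    simpa [image_eq_range] using isCompact_Icc.bddAbove_image hc
  rw [h0, sub_zero] at hx
  exact hx.trans (le_ciSup h_bdd ⟨_, dyadic_mem_Icc hT hj⟩)

lemma mem_iUnion_dyadicCrossing_of_lt_iSup (hT : 0 < T) {ω : Ω} (h0 : W 0 ω = 0)
    (hc : ContinuousOn (fun t => W t ω) (Icc 0 T)) (h : x < ⨆ t : Icc (0 : ℝ) T, W t ω) :
    ω ∈ ⋃ k, dyadicCrossing W T x k := by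
  have : Nonempty (Icc (0 : ℝ) T) := ⟨⟨0, le_rfl, hT.le⟩⟩
  obtain ⟨⟨t, ht⟩, hxt⟩ := exists_lt_of_lt_ciSup h
  -- the dyadic points `⌊t 2^k / T⌋ T / 2^k` of `[0, T]` approach `t` from below
  set j : ℕ → ℕ := fun k => ⌊t * 2 ^ k / T⌋₊
  have hj : ∀ k, j k ≤ 2 ^ k := fun k => Nat.floor_le_of_le <| by
    rw [div_le_iff₀ hT]; push_cast; nlinarith [ht.2, pow_pos (two_pos : (0 : ℝ) < 2) k]
  have h_le : ∀ k, (j k : ℝ) * T / 2 ^ k ≤ t := fun k => by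
    rw [div_le_iff₀ (by positivity), ← le_div_iff₀ hT]
    exact Nat.floor_le (by have := ht.1; positivity)
  have h_gt : ∀ k, t - T / 2 ^ k < (j k : ℝ) * T / 2 ^ k := fun k => by
    have := Nat.lt_floor_add_one (t * 2 ^ k / T)
    rw [div_lt_iff₀ hT] at this
    rw [lt_div_iff₀ (by positivity), sub_mul, div_mul_cancel₀ _ (by positivity)]
    linarith
  have h_tend : Tendsto (fun k => (j k : ℝ) * T / 2 ^ k) atTop (𝓝[Icc 0 T] t) := by
    refine tendsto_nhdsWithin_iff.2 ⟨?_, .of_forall fun k => dyadic_mem_Icc hT.le (hj k)⟩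
    refine tendsto_of_tendsto_of_tendsto_of_le_of_le ?_ tendsto_const_nhds
      (fun k => (h_gt k).le) h_le
    have h_mesh : Tendsto (fun k : ℕ => T / 2 ^ k) atTop (𝓝 0) :=
      tendsto_const_nhds.div_atTop (tendsto_pow_atTop_atTop_of_one_lt one_lt_two)
    simpa using tendsto_const_nhds.sub h_mesh
  obtain ⟨k, hk⟩ := ((hc t ht).tendsto.comp h_tend |>.eventually (lt_mem_nhds hxt)).exists
  exact mem_iUnion.2 ⟨k, j k, hj k, by rw [h0, sub_zero]; exact hk.le⟩

variable [MeasurableSpace Ω] {P : Measure Ω}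

namespace IsStdBrownianMotion

lemma isNegInvariant_map_sub (hW : IsStdBrownianMotion P W) {s t : ℝ} (hs : 0 ≤ s) (hst : s ≤ t) :
    (P.map fun ω => W t ω - W s ω).IsNegInvariant := by
  rw [hW.gauss_incr s t hs hst]
  exact isNegInvariant_gaussianReal _

lemma measurable_dyadicIncrement (hW : IsStdBrownianMotion P W) (i : ℕ) :
    Measurable (dyadicIncrement W T k i) :=
  (hW.meas _).sub (hW.meas _)

lemma iIndepFun_dyadicIncrement (hW : IsStdBrownianMotion P W) (hT : 0 ≤ T) (k : ℕ) :
    iIndepFun (fun i : Fin (2 ^ k) => dyadicIncrement W T k i) P := by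
  have h := hW.indep_incr (2 ^ k) (fun i => i * T / 2 ^ k) (fun i => by positivity)
    fun i j hij => by dsimp only; gcongr; exact_mod_cast hij
  convert h using 3 with i ω
  simp [dyadicIncrement, Fin.val_succ]

lemma isNegInvariant_map_dyadic_tail (hW : IsStdBrownianMotion P W) (hT : 0 ≤ T) {j : ℕ}
    (hj : j ≤ 2 ^ k) :
    (P.map fun ω => partialSum (dyadicIncrement W T k) (2 ^ k) ω
      - partialSum (dyadicIncrement W T k) j ω).IsNegInvariant := by
  simp_rw [partialSum_dyadicIncrement_two_pow, partialSum_dyadicIncrement, sub_sub_sub_cancel_right]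
  exact hW.isNegInvariant_map_sub (dyadic_mem_Icc hT hj).1 (dyadic_mem_Icc hT hj).2

lemma map_partialSum_dyadicIncrement_two_pow (hW : IsStdBrownianMotion P W) (hT : 0 ≤ T) :
    P.map (partialSum (dyadicIncrement W T k) (2 ^ k)) = gaussianReal 0 T.toNNReal := by
  simp_rw [funext partialSum_dyadicIncrement_two_pow, hW.gauss_incr 0 T le_rfl hT, sub_zero]

lemma map_dyadicIncrement (hW : IsStdBrownianMotion P W) (hT : 0 ≤ T) (i : ℕ) :
    P.map (dyadicIncrement W T k i) = gaussianReal 0 (T / 2 ^ k).toNNReal := by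
  change P.map (fun ω => W ((i + 1) * T / 2 ^ k) ω - W (i * T / 2 ^ k) ω) = _
  rw [hW.gauss_incr _ _ (by positivity) (by gcongr; linarith)]
  congr 2
  ring

lemma measurableSet_dyadicCrossing (hW : IsStdBrownianMotion P W) (x : ℝ) (k : ℕ) :
    MeasurableSet (dyadicCrossing W T x k) :=
  dyadicCrossing_eq_levelCrossing ▸ measurableSet_levelCrossing hW.measurable_dyadicIncrement x _

variable [IsProbabilityMeasure P]

lemma measure_dyadicIncrement_ge_le (hW : IsStdBrownianMotion P W) (hT : 0 < T) {ε : ℝ} (hε : 0 ≤ ε) (i : ℕ) :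
    P {ω | ε ≤ dyadicIncrement W T k i ω}
      ≤ ENNReal.ofReal (Real.exp (-(ε ^ 2 / (2 * T)) * 2 ^ k)) := by
  have h_sub : HasSubgaussianMGF (dyadicIncrement W T k i) (T / 2 ^ k).toNNReal P := by
    rw [← HasSubgaussianMGF.id_map_iff (hW.measurable_dyadicIncrement i).aemeasurable,
      hW.map_dyadicIncrement hT.le]
    exact hasSubgaussianMGF_id_gaussianReal _
  rw [← ofReal_measureReal]
  refine ENNReal.ofReal_le_ofReal ((h_sub.measure_ge_le hε).trans_eq ?_)
  rw [Real.coe_toNNReal _ (by positivity)]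
  field_simp

lemma tendsto_measure_exists_dyadicIncrement_ge (hW : IsStdBrownianMotion P W) (hT : 0 < T)
    {ε : ℝ} (hε : 0 < ε) :
    Tendsto (fun k => P {ω | ∃ i < 2 ^ k, ε ≤ dyadicIncrement W T k i ω}) atTop (𝓝 0) := by
  set c := ε ^ 2 / (2 * T)
  have hc : 0 < c := by positivity
  have h_bound : ∀ k, P {ω | ∃ i < 2 ^ k, ε ≤ dyadicIncrement W T k i ω}
      ≤ ENNReal.ofReal (2 ^ k * Real.exp (-c * 2 ^ k)) := by
    intro k
    have h_union : {ω | ∃ i < 2 ^ k, ε ≤ dyadicIncrement W T k i ω}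
        = ⋃ i ∈ Finset.range (2 ^ k), {ω | ε ≤ dyadicIncrement W T k i ω} := by
      ext; simp
    calc P {ω | ∃ i < 2 ^ k, ε ≤ dyadicIncrement W T k i ω}
        ≤ ∑ i ∈ Finset.range (2 ^ k), P {ω | ε ≤ dyadicIncrement W T k i ω} :=
          h_union ▸ measure_biUnion_finset_le _ _
      _ ≤ ∑ _i ∈ Finset.range (2 ^ k), ENNReal.ofReal (Real.exp (-c * 2 ^ k)) :=
          Finset.sum_le_sum fun i _ => hW.measure_dyadicIncrement_ge_le hT hε.le i
      _ = ENNReal.ofReal (2 ^ k * Real.exp (-c * 2 ^ k)) := by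
          simp [ENNReal.ofReal_mul, ENNReal.ofReal_pow]
  -- `y e^{-c y} → 0` along `y = 2^k`
  have h_lim : Tendsto (fun k : ℕ => (2 : ℝ) ^ k * Real.exp (-c * 2 ^ k)) atTop (𝓝 0) := by
    have h := ((Real.tendsto_pow_mul_exp_neg_atTop_nhds_zero 1).comp
      ((tendsto_pow_atTop_atTop_of_one_lt one_lt_two).const_mul_atTop hc)).const_mul c⁻¹
    rw [mul_zero] at h
    refine h.congr fun k => ?_
    simp only [Function.comp_apply, pow_one, neg_mul]
    field_simp
  refine tendsto_of_tendsto_of_tendsto_of_le_of_le tendsto_const_nhds ?_ (fun _ => bot_le) h_bound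
  simpa using ENNReal.tendsto_ofReal h_lim

lemma measure_iUnion_dyadicCrossing_le (hW : IsStdBrownianMotion P W) (hT : 0 < T) :
    P (⋃ k, dyadicCrossing W T x k) ≤ 2 * gaussianReal 0 T.toNNReal (Ioi x) := by
  rw [monotone_dyadicCrossing.measure_iUnion]
  refine iSup_le fun k => ?_
  have h := measure_levelCrossing_le (x := x) hW.measurable_dyadicIncrement
    (hW.iIndepFun_dyadicIncrement hT.le k) fun j hj => hW.isNegInvariant_map_dyadic_tail hT.le hj
  rwa [← dyadicCrossing_eq_levelCrossing, hW.map_partialSum_dyadicIncrement_two_pow hT.le,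
    gaussianReal_Ici (by simpa using hT), ← two_mul] at h

lemma le_measure_iUnion_dyadicCrossing (hW : IsStdBrownianMotion P W) (hT : 0 < T) (hx : 0 < x)
    {ε : ℝ} (hε : 0 < ε) :
    2 * gaussianReal 0 T.toNNReal (Ioi (x + 2 * ε)) ≤ P (⋃ k, dyadicCrossing W T x k) := by
  have h_overshoot : ∀ k, gaussianReal 0 T.toNNReal (Ici x)
      + gaussianReal 0 T.toNNReal (Ioi (x + 2 * ε)) ≤ P (⋃ k, dyadicCrossing W T x k)
        + P {ω | ∃ i < 2 ^ k, ε ≤ dyadicIncrement W T k i ω} := fun k => by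
    have h := le_measure_levelCrossing_add hx hε.le hW.measurable_dyadicIncrement
      (hW.iIndepFun_dyadicIncrement hT.le k) fun j hj => hW.isNegInvariant_map_dyadic_tail hT.le hj
    rw [← dyadicCrossing_eq_levelCrossing, hW.map_partialSum_dyadicIncrement_two_pow hT.le] at h
    exact h.trans (add_le_add_left (measure_mono (subset_iUnion (dyadicCrossing W T x) k)) _)
  have h_tend : Tendsto (fun k => P (⋃ k, dyadicCrossing W T x k)
      + P {ω | ∃ i < 2 ^ k, ε ≤ dyadicIncrement W T k i ω}) atTop
      (𝓝 (P (⋃ k, dyadicCrossing W T x k))) := by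
    simpa using tendsto_const_nhds.add (hW.tendsto_measure_exists_dyadicIncrement_ge hT hε)
  calc 2 * gaussianReal 0 T.toNNReal (Ioi (x + 2 * ε))
      ≤ gaussianReal 0 T.toNNReal (Ici x) + gaussianReal 0 T.toNNReal (Ioi (x + 2 * ε)) := by
        rw [two_mul]
        gcongr
        exact Ioi_subset_Ici (by linarith)
    _ ≤ P (⋃ k, dyadicCrossing W T x k) := ge_of_tendsto' h_tend h_overshoot

lemma measure_iUnion_dyadicCrossing (hW : IsStdBrownianMotion P W) (hT : 0 < T) (hx : 0 < x) :
    P (⋃ k, dyadicCrossing W T x k) = 2 * gaussianReal 0 T.toNNReal (Ioi x) := by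
  have hT0 : T.toNNReal ≠ 0 := by simpa using hT
  refine le_antisymm (hW.measure_iUnion_dyadicCrossing_le hT) ?_
  -- let `ε → 0` in the lower bound, through the continuity of `erf`
  have h_cont : Continuous fun ε : ℝ =>
      1 - ENNReal.ofReal (erf ((x + 2 * ε) / √(2 * T.toNNReal))) :=
    (ENNReal.continuous_sub_left ENNReal.one_ne_top).comp <| ENNReal.continuous_ofReal.comp <|
      continuous_erf.comp <| by fun_prop
  have h_lim := (h_cont.tendsto 0).mono_left (nhdsWithin_le_nhds (s := Ioi 0))
  rw [mul_zero, add_zero] at h_lim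
  rw [two_mul_gaussianReal_Ioi hT0 hx.le]
  refine le_of_tendsto h_lim (eventually_nhdsWithin_of_forall fun ε (hε : 0 < ε) => ?_)
  rw [← two_mul_gaussianReal_Ioi hT0 (by linarith)]
  exact hW.le_measure_iUnion_dyadicCrossing hT hx hε

lemma measure_compl_iUnion_dyadicCrossing (hW : IsStdBrownianMotion P W) (hT : 0 < T)
    (hx : 0 < x) :
    P (⋃ k, dyadicCrossing W T x k)ᶜ = ENNReal.ofReal (erf (x / √(2 * T))) := by
  rw [prob_compl_eq_one_sub (.iUnion fun k => hW.measurableSet_dyadicCrossing x k),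
    hW.measure_iUnion_dyadicCrossing hT hx,
    ENNReal.sub_eq_of_eq_add (by simp [two_mul]) (gaussianReal_Icc_neg_add_two_mul_Ioi hx.le).symm,
    gaussianReal_Icc_neg (by simpa using hT) hx.le, Real.coe_toNNReal _ hT.le]

end IsStdBrownianMotion

end Brownian

/-- Level crossing: `P(sup_{0 ≤ t ≤ T} W_t < a) = erf(a / √(2T))`. -/
theorem brownian_running_sup_lt_level {Ω : Type*} [MeasurableSpace Ω]
    (P : Measure Ω) [IsProbabilityMeasure P] (W : ℝ → Ω → ℝ)
    (hW : IsStdBrownianMotion P W) (T a : ℝ) (hT : 0 < T) (ha : 0 < a) :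
    P {ω | (⨆ t : Set.Icc (0:ℝ) T, W t ω) < a}
      = ENNReal.ofReal (erf (a / Real.sqrt (2 * T))) := by
  have h_paths : ∀ᵐ ω ∂P, W 0 ω = 0 ∧ ContinuousOn (fun t => W t ω) (Icc 0 T) :=
    hW.init.and (hW.cont.mono fun ω h => h.mono Icc_subset_Ici_self)
  have h_upper : P {ω | (⨆ t : Icc (0:ℝ) T, W t ω) < a} ≤ P (⋃ k, dyadicCrossing W T a k)ᶜ :=
    measure_mono_ae <| h_paths.mono fun ω ⟨h0, hc⟩ hlt h =>
      (le_iSup_of_mem_iUnion_dyadicCrossing hT.le h0 hc h).not_gt hlt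
  have h_lower : ∀ y ∈ Ioo 0 a,
      P (⋃ k, dyadicCrossing W T y k)ᶜ ≤ P {ω | (⨆ t : Icc (0:ℝ) T, W t ω) < a} := fun y hy =>
    measure_mono_ae <| h_paths.mono fun ω ⟨h0, hc⟩ hω => not_le.1 fun h =>
      hω (mem_iUnion_dyadicCrossing_of_lt_iSup hT h0 hc (hy.2.trans_le h))
  have h_cont : Tendsto (fun y => ENNReal.ofReal (erf (y / √(2 * T)))) (𝓝[<] a)
      (𝓝 (ENNReal.ofReal (erf (a / √(2 * T))))) :=
    ((ENNReal.continuous_ofReal.comp (continuous_erf.comp (continuous_id.div_const _))).tendsto a)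
      |>.mono_left nhdsWithin_le_nhds
  refine le_antisymm (h_upper.trans (hW.measure_compl_iUnion_dyadicCrossing hT ha).le)
    (le_of_tendsto h_cont ?_)
  filter_upwards [Ioo_mem_nhdsLT ha] with y hy
  exact (hW.measure_compl_iUnion_dyadicCrossing hT hy.1).symm.trans_le (h_lower y hy)
end

section
/- Let W be a standard one-dimensional Brownian motion on a probability space (Ω, F, P), let T > 0, ζ > 0, K > 0, and let g : [0, T] × Ω → ℝ be a stochastic process such that, for almost every ω, there exists τ ∈ [0, T] with g_τ(ω) ≤ −K. Then the probability that the drift-plus-scaled-Brownian process reaches the level 0 from above within [0, T] satisfies P( ∃ t ∈ [0, T], g_t + ζ·W_t ≤ 0 ) ≥ erf( K / (ζ√(2T)) ). -/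
open MeasureTheory ProbabilityTheory

/-!
Put `a = K / ζ`. By Lévy's maximal inequality (the discrete reflection principle), for any finite
set of times in `[0, T]` the probability that `W - W₀` exceeds `a` at one of them is at most
`2 P(W_T ≥ a)`; by continuity from below this persists for a countable dense set of times, and by
path continuity `W - W₀ ≤ a` then holds on all of `[0, T]` with probability at least
`1 - 2 P(W_T ≥ a) ≥ P(|W_T| < a) = erf (a / √(2T))`. On that event `g_τ + ζ W_τ ≤ -K + ζ a = 0`.
-/

open Real Set
open scoped NNReal ENNReal

lemma integral_neg_self_eq_two_mul_of_even {f : ℝ → ℝ} (hf : Continuous f)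
    (heven : f.Even) (b : ℝ) :
    ∫ x in -b..b, f x = 2 * ∫ x in (0:ℝ)..b, f x := by
  have hneg : ∫ x in -b..0, f x = ∫ x in (0:ℝ)..b, f x := by
    simpa [heven _] using (intervalIntegral.integral_comp_neg (a := 0) (b := b) f).symm
  rw [← intervalIntegral.integral_add_adjacent_intervals (b := 0) (hf.intervalIntegrable _ _)
    (hf.intervalIntegrable _ _), hneg, two_mul]

lemma erf_div_sqrt_eq_intervalIntegral_gaussianPDFReal {v : ℝ≥0} (hv : v ≠ 0) (a : ℝ) :
    erf (a / √(2 * v)) = ∫ x in -a..a, gaussianPDFReal 0 v x := by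
  have hc : 0 < √(2 * v) := by positivity
  have hpdf : gaussianPDFReal 0 v = fun x ↦ (√π * √(2 * v))⁻¹ * rexp (-(x / √(2 * v)) ^ 2) := by
    ext x
    rw [gaussianPDFReal, ← Real.sqrt_mul pi_pos.le, div_pow, Real.sq_sqrt (by positivity)]
    ring_nf
  rw [hpdf, intervalIntegral.integral_const_mul,
    intervalIntegral.integral_comp_div (fun u ↦ rexp (-u ^ 2)) hc.ne', neg_div,
    integral_neg_self_eq_two_mul_of_even (by fun_prop) (by simp [Function.Even]), erf, smul_eq_mul]
  field_simp

lemma gaussianReal_Iic_neg (v : ℝ≥0) (a : ℝ) :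
    gaussianReal 0 v (Iic (-a)) = gaussianReal 0 v (Ici a) := by
  conv_lhs => rw [← neg_zero, ← gaussianReal_map_neg]
  rw [Measure.map_apply measurable_neg measurableSet_Iic]
  congr 1
  ext x
  simp

lemma inv_two_le_gaussianReal_Ici_zero (v : ℝ≥0) : 2⁻¹ ≤ gaussianReal 0 v (Ici 0) := by
  have h : 1 ≤ 2 * gaussianReal 0 v (Ici 0) :=
    calc 1 = gaussianReal 0 v (Iic 0 ∪ Ici 0) := by rw [Iic_union_Ici, measure_univ]
      _ ≤ gaussianReal 0 v (Iic (-0)) + gaussianReal 0 v (Ici 0) := by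
        rw [neg_zero]; exact measure_union_le _ _
      _ = 2 * gaussianReal 0 v (Ici 0) := by rw [gaussianReal_Iic_neg, two_mul]
  rwa [ENNReal.inv_le_iff_le_mul (by simp) (by simp)]

lemma ofReal_erf_add_two_mul_gaussianReal_Ici_le_one {v : ℝ≥0} (hv : v ≠ 0) {a : ℝ}
    (ha : 0 < a) :
    ENNReal.ofReal (erf (a / √(2 * v))) + 2 * gaussianReal 0 v (Ici a) ≤ 1 := by
  set μ := gaussianReal 0 v
  have herf : ENNReal.ofReal (erf (a / √(2 * v))) = μ (Ioo (-a) a) := by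
    rw [gaussianReal_apply_eq_integral 0 hv, erf_div_sqrt_eq_intervalIntegral_gaussianPDFReal hv,
      intervalIntegral.integral_of_le (by linarith), integral_Ioc_eq_integral_Ioo]
  calc ENNReal.ofReal (erf (a / √(2 * v))) + 2 * μ (Ici a)
      = μ (Ioo (-a) a) + μ (Iic (-a)) + μ (Ici a) := by
        rw [herf, gaussianReal_Iic_neg, two_mul, add_assoc]
    _ = μ (Ioo (-a) a ∪ Iic (-a) ∪ Ici a) := by
        rw [measure_union _ measurableSet_Ici, measure_union _ measurableSet_Iic]
        · exact disjoint_left.mpr fun x hx hx' ↦ by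
            simp only [mem_Ioo, mem_Iic] at hx hx'; linarith
        · exact disjoint_left.mpr fun x hx hx' ↦ by
            simp only [mem_union, mem_Ioo, mem_Iic, mem_Ici] at hx hx'; grind
    _ ≤ 1 := prob_le_one

section MaximalInequality

variable {Ω ι : Type*} [LinearOrder ι] {X : ι → Ω → ℝ}

def firstExceedance (X : ι → Ω → ℝ) (a : ℝ) (k : ι) : Set Ω :=
  {ω | (∀ j < k, X j ω ≤ a) ∧ a < X k ω}

lemma iUnion_firstExceedance [WellFoundedLT ι] (a : ℝ) :
    ⋃ k, firstExceedance X a k = {ω | ∃ k, a < X k ω} := by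
  ext ω
  simp only [mem_iUnion, mem_ofPred_eq, firstExceedance]
  refine ⟨fun ⟨k, _, hk⟩ ↦ ⟨k, hk⟩, fun hex ↦ ?_⟩
  obtain ⟨k, hk, hmin⟩ := wellFounded_lt.has_min {k | a < X k ω} hex
  exact ⟨k, fun j hj ↦ not_lt.mp fun hj' ↦ hmin j hj' hj, hk⟩

lemma pairwise_disjoint_firstExceedance (a : ℝ) :
    Pairwise (Function.onFun Disjoint (firstExceedance X a)) := by
  have key : ∀ k l, k < l → Disjoint (firstExceedance X a k) (firstExceedance X a l) :=
    fun k l hkl ↦ disjoint_left.mpr fun ω hk hl ↦ (hl.1 k hkl).not_gt hk.2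
  intro k l hkl
  rcases hkl.lt_or_gt with h | h
  exacts [key k l h, (key l k h).symm]

lemma exists_measurableSet_firstExceedance_eq_preimage [Countable ι] (a : ℝ) (k : ι) :
    ∃ M : Set (Iic k → ℝ), MeasurableSet M ∧
      firstExceedance X a k = (fun ω (j : Iic k) ↦ X j ω) ⁻¹' M := by
  refine ⟨(⋂ j : Iic k, {v | (j : ι) < k → v j ≤ a}) ∩ {v | a < v ⟨k, le_rfl⟩}, ?_, ?_⟩
  · refine .inter (.iInter fun j ↦ ?_) (measurableSet_lt measurable_const (measurable_pi_apply _))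
    by_cases hj : (j : ι) < k
    · simpa [hj] using measurableSet_le (measurable_pi_apply j) measurable_const
    · simp [hj]
  · ext ω
    simp only [firstExceedance, mem_ofPred_eq, mem_preimage, mem_inter_iff, mem_iInter,
      Subtype.forall, mem_Iic]
    exact and_congr_left' ⟨fun h j _ ↦ h j, fun h j hj ↦ h j hj.le hj⟩

variable [MeasurableSpace Ω] {P : Measure Ω}

lemma measurableSet_firstExceedance [Countable ι] (hX : ∀ k, Measurable (X k)) (a : ℝ)
    (k : ι) : MeasurableSet (firstExceedance X a k) := by
  obtain ⟨M, hM, hA⟩ := exists_measurableSet_firstExceedance_eq_preimage (X := X) a k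
  exact hA ▸ (measurable_pi_lambda (fun ω (j : Iic k) ↦ X j ω) fun j ↦ hX j) hM

/-- Lévy's maximal inequality. Split according to the first index `k` at which `X` exceeds `a`;
independently of the path up to `k`, `X` does not decrease from `k` to `⊤` with probability at
least `1/2`. -/
theorem measure_exists_lt_le_two_mul [Countable ι] [WellFoundedLT ι] [OrderTop ι]
    (hX : ∀ k, Measurable (X k))
    (hindep : ∀ k, IndepFun (fun ω (j : Iic k) ↦ X j ω) (fun ω ↦ X ⊤ ω - X k ω) P)
    (hmedian : ∀ k, 2⁻¹ ≤ P {ω | X k ω ≤ X ⊤ ω}) (a : ℝ) :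
    P {ω | ∃ k, a < X k ω} ≤ 2 * P {ω | a ≤ X ⊤ ω} := by
  set A := firstExceedance X a
  set B : ι → Set Ω := fun k ↦ {ω | X k ω ≤ X ⊤ ω}
  have hB : ∀ k, MeasurableSet (B k) := fun k ↦ measurableSet_le (hX k) (hX ⊤)
  have hAB : ∀ k, P (A k) ≤ 2 * P (A k ∩ B k) := by
    intro k
    have hprod : P (A k ∩ B k) = P (A k) * P (B k) := by
      have hBk : B k = (fun ω ↦ X ⊤ ω - X k ω) ⁻¹' Ici 0 := by ext ω; simp [B]
      obtain ⟨M, hM, hA⟩ := exists_measurableSet_firstExceedance_eq_preimage (X := X) a k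
      rw [show A k = _ from hA, hBk]
      exact (hindep k).measure_inter_preimage_eq_mul _ _ hM measurableSet_Ici
    calc P (A k) = 2 * (2⁻¹ * P (A k)) := by
          rw [← mul_assoc, ENNReal.mul_inv_cancel (by simp) (by simp), one_mul]
      _ ≤ 2 * P (A k ∩ B k) := by
          rw [hprod, mul_comm (P (A k))]
          gcongr
          exact hmedian k
  calc P {ω | ∃ k, a < X k ω} = ∑' k, P (A k) := by
        rw [← iUnion_firstExceedance, measure_iUnion (pairwise_disjoint_firstExceedance a)
          (measurableSet_firstExceedance hX a)]
    _ ≤ ∑' k, 2 * P (A k ∩ B k) := ENNReal.tsum_le_tsum hAB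
    _ = 2 * P (⋃ k, A k ∩ B k) := by
        rw [ENNReal.tsum_mul_left, measure_iUnion
          (fun k l hkl ↦ (pairwise_disjoint_firstExceedance a hkl).mono inter_subset_left
            inter_subset_left)
          fun k ↦ (measurableSet_firstExceedance hX a k).inter (hB k)]
    _ ≤ 2 * P {ω | a ≤ X ⊤ ω} := by
        gcongr
        exact iUnion_subset fun k ω ⟨hA, hB⟩ ↦ hA.2.le.trans hB

end MaximalInequality

lemma Fin.sum_castSucc_lt_sub {G : Type*} [AddCommGroup G] {n : ℕ} (f : Fin (n + 1) → G)
    (k : Fin (n + 1)) : ∑ i : Fin n with i.castSucc < k, (f i.succ - f i.castSucc) = f k - f 0 := by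
  induction k using Fin.induction with
  | zero => simp
  | succ k ih =>
    have hfilter : Finset.univ.filter (fun i : Fin n ↦ i.castSucc < k.succ) =
        insert k (Finset.univ.filter fun i : Fin n ↦ i.castSucc < k.castSucc) := by
      ext i
      simp only [Finset.mem_filter_univ, Finset.mem_insert, Fin.lt_def, Fin.val_castSucc,
        Fin.val_succ, Fin.ext_iff]
      omega
    rw [hfilter, Finset.sum_insert (by simp), ih]
    abel

namespace IsStdBrownianMotion

variable {Ω : Type*} [MeasurableSpace Ω] {P : Measure Ω} {W : ℝ → Ω → ℝ}

lemma measure_sub_mem (hW : IsStdBrownianMotion P W) {s t : ℝ} (hs : 0 ≤ s) (hst : s ≤ t)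
    {A : Set ℝ} (hA : MeasurableSet A) :
    P {ω | W t ω - W s ω ∈ A} = gaussianReal 0 (t - s).toNNReal A := by
  rw [← hW.gauss_incr s t hs hst,
    Measure.map_apply (f := fun ω ↦ W t ω - W s ω) ((hW.meas t).sub (hW.meas s)) hA]
  rfl

lemma indepFun_restrict_Iic_sub (hW : IsStdBrownianMotion P W) {n : ℕ} {t : Fin (n + 1) → ℝ}
    (h0 : ∀ i, 0 ≤ t i) (ht : Monotone t) (k : Fin (n + 1)) :
    IndepFun (fun ω (j : Iic k) ↦ W (t j) ω - W (t 0) ω)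
      (fun ω ↦ (W (t ⊤) ω - W (t 0) ω) - (W (t k) ω - W (t 0) ω)) P := by
  set D : Fin n → Ω → ℝ := fun i ω ↦ W (t i.succ) ω - W (t i.castSucc) ω
  set S : Finset (Fin n) := {i | i.castSucc < k}
  have hpast : ∀ ω, ∀ j ≤ k,
      ∑ i : S with i.1.castSucc < j, D i ω = W (t j) ω - W (t 0) ω := by
    intro ω j hj
    rw [Finset.sum_filter, Finset.sum_coe_sort S (fun i ↦ if i.castSucc < j then D i ω else 0),
      Finset.sum_subset (Finset.subset_univ S) fun i _ hi ↦ ?_, ← Finset.sum_filter]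
    · exact Fin.sum_castSucc_lt_sub (fun i ↦ W (t i) ω) j
    · simp only [S, Finset.mem_filter_univ, not_lt] at hi
      simp [(hj.trans hi).not_gt]
  have hfuture : ∀ ω, ∑ i : (Sᶜ : Finset (Fin n)), D i ω =
      (W (t ⊤) ω - W (t 0) ω) - (W (t k) ω - W (t 0) ω) := by
    intro ω
    have htotal : ∑ i, D i ω = W (t ⊤) ω - W (t 0) ω := by
      have h := Fin.sum_castSucc_lt_sub (fun i ↦ W (t i) ω) ⊤
      rwa [Finset.filter_true_of_mem fun i _ ↦ (Fin.castSucc_lt_last i : i.castSucc < ⊤)] at h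
    rw [Finset.sum_coe_sort Sᶜ (fun i ↦ D i ω), ← htotal,
      ← Fin.sum_castSucc_lt_sub (fun i ↦ W (t i) ω) k, ← Finset.sum_compl_add_sum S]
    abel
  have hind := (hW.indep_incr n t h0 ht).indepFun_finset S Sᶜ disjoint_compl_right
    fun i ↦ (hW.meas _).sub (hW.meas _)
  have hcomp := hind.comp
    (φ := fun v (j : Iic k) ↦ ∑ i : S with i.1.castSucc < j.1, v i)
    (ψ := fun v ↦ ∑ i, v i)
    (measurable_pi_lambda _ fun j ↦ Finset.measurable_sum _ fun i _ ↦ measurable_pi_apply i)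
    (by fun_prop)
  convert hcomp using 1
  · exact funext fun ω ↦ funext fun j ↦ (hpast ω j j.2).symm
  · exact funext fun ω ↦ (hfuture ω).symm

lemma measure_exists_mem_finset_lt_le (hW : IsStdBrownianMotion P W) {T : ℝ} (hT : 0 ≤ T)
    {F : Finset ℝ} (hF : ↑F ⊆ Icc 0 T) (a : ℝ) :
    P {ω | ∃ s ∈ F, a < W s ω - W 0 ω} ≤ 2 * gaussianReal 0 T.toNNReal (Ici a) := by
  set G := insert 0 (insert T F)
  have hG : ↑G ⊆ Icc 0 T := by
    simpa [G, insert_subset_iff, hT] using hF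
  obtain ⟨n, hn⟩ : ∃ n, G.card = n + 1 :=
    Nat.exists_eq_succ_of_ne_zero (Finset.card_ne_zero.mpr ⟨0, by simp [G]⟩)
  set t := G.orderEmbOfFin hn
  have hrange : range t = G := G.range_orderEmbOfFin hn
  have ht : ∀ i, t i ∈ Icc 0 T := fun i ↦ hG (hrange ▸ mem_range_self i)
  have ht0 : t 0 = 0 := by
    obtain ⟨i, hi⟩ : (0 : ℝ) ∈ range t := by simp [hrange, G]
    exact le_antisymm (hi ▸ t.monotone (Fin.zero_le i)) (ht 0).1
  have htop : t ⊤ = T := by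
    obtain ⟨i, hi⟩ : T ∈ range t := by simp [hrange, G]
    exact le_antisymm (ht ⊤).2 (hi ▸ t.monotone le_top)
  have hmedian : ∀ k, 2⁻¹ ≤ P {ω | W (t k) ω - W (t 0) ω ≤ W (t ⊤) ω - W (t 0) ω} := by
    intro k
    calc 2⁻¹ ≤ gaussianReal 0 (t ⊤ - t k).toNNReal (Ici 0) := inv_two_le_gaussianReal_Ici_zero _
      _ = P {ω | W (t ⊤) ω - W (t k) ω ∈ Ici 0} :=
        (hW.measure_sub_mem (ht k).1 (t.monotone le_top) measurableSet_Ici).symm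
      _ = P {ω | W (t k) ω - W (t 0) ω ≤ W (t ⊤) ω - W (t 0) ω} := by simp
  calc P {ω | ∃ s ∈ F, a < W s ω - W 0 ω}
      ≤ P {ω | ∃ k, a < W (t k) ω - W (t 0) ω} := by
        refine measure_mono fun ω ⟨s, hs, hlt⟩ ↦ ?_
        obtain ⟨k, rfl⟩ : s ∈ range t := by simp [hrange, G, hs]
        exact ⟨k, ht0 ▸ hlt⟩
    _ ≤ 2 * P {ω | a ≤ W (t ⊤) ω - W (t 0) ω} :=
        measure_exists_lt_le_two_mul (X := fun k ω ↦ W (t k) ω - W (t 0) ω)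
          (fun k ↦ (hW.meas _).sub (hW.meas _))
          (hW.indepFun_restrict_Iic_sub (fun i ↦ (ht i).1) t.monotone) hmedian a
    _ = 2 * gaussianReal 0 T.toNNReal (Ici a) := by
        rw [ht0, htop, ← sub_zero T, ← hW.measure_sub_mem le_rfl hT measurableSet_Ici, sub_zero]
        rfl

lemma measure_exists_mem_lt_le (hW : IsStdBrownianMotion P W) {T : ℝ} (hT : 0 ≤ T)
    {D : Set ℝ} (hD : D.Countable) (hDT : D ⊆ Icc 0 T) (a : ℝ) :
    P {ω | ∃ s ∈ D, a < W s ω - W 0 ω} ≤ 2 * gaussianReal 0 T.toNNReal (Ici a) := by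
  have := hD.to_subtype
  have hunion : {ω | ∃ s ∈ D, a < W s ω - W 0 ω} =
      ⋃ S : Finset D, {ω | ∃ s ∈ S.map (.subtype _), a < W s ω - W 0 ω} := by
    ext ω
    simp only [mem_ofPred_eq, mem_iUnion, Finset.mem_map, Function.Embedding.coe_subtype]
    exact ⟨fun ⟨s, hs, h⟩ ↦ ⟨{⟨s, hs⟩}, s, ⟨⟨s, hs⟩, by simp⟩, h⟩,
      fun ⟨_, _, ⟨s, _, rfl⟩, h⟩ ↦ ⟨s, s.2, h⟩⟩
  have hmono : Monotone fun S : Finset D ↦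
      {ω | ∃ s ∈ S.map (.subtype _), a < W s ω - W 0 ω} :=
    fun S S' h ω ⟨s, hs, hlt⟩ ↦ ⟨s, Finset.map_subset_map.mpr h hs, hlt⟩
  rw [hunion, hmono.directed_le.measure_iUnion]
  refine iSup_le fun S ↦ hW.measure_exists_mem_finset_lt_le hT (fun x hx ↦ ?_) a
  obtain ⟨s, -, rfl⟩ := Finset.mem_map.mp hx
  exact hDT s.2

end IsStdBrownianMotion

/-- If a.s. there is some `τ ∈ [0,T]` with `g_τ(ω) ≤ -K` (`K > 0`), then the process
`g_t + ζ W_t` reaches the level `0` from above within `[0,T]` with probability at least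
`erf(K / (ζ√(2T)))` (the probability of a possibly non-measurable event being
interpreted via the outer measure). -/
theorem drift_plus_scaled_brownian_reaches_zero {Ω : Type*} [MeasurableSpace Ω]
    (P : Measure Ω) [IsProbabilityMeasure P] (W : ℝ → Ω → ℝ)
    (hW : IsStdBrownianMotion P W) (T ζ K : ℝ) (hT : 0 < T) (hζ : 0 < ζ)
    (hK : 0 < K) (g : ℝ → Ω → ℝ)
    (hg : ∀ᵐ ω ∂P, ∃ τ ∈ Set.Icc (0:ℝ) T, g τ ω ≤ -K) :
    ENNReal.ofReal (erf (K / (ζ * Real.sqrt (2 * T)))) ≤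
      P {ω | ∃ t ∈ Set.Icc (0:ℝ) T, g t ω + ζ * W t ω ≤ 0} := by
  obtain ⟨D, hDT, hD, hTD⟩ :=
    (TopologicalSpace.IsSeparable.of_separableSpace (Icc 0 T)).exists_countable_dense_subset
  set a := K / ζ
  set V := {ω | ∃ s ∈ D, a < W s ω - W 0 ω}
  have hV : P V ≤ 2 * gaussianReal 0 T.toNNReal (Ici a) :=
    hW.measure_exists_mem_lt_le hT.le hD hDT a
  have hVc : ∀ᵐ ω ∂P, ω ∈ Vᶜ → ω ∈ {ω | ∃ t ∈ Icc 0 T, g t ω + ζ * W t ω ≤ 0} := by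
    filter_upwards [hg, hW.cont, hW.init] with ω ⟨τ, hτ, hgτ⟩ hcont h0 hωV
    have hWτ : W τ ω - W 0 ω ≤ a :=
      (((hcont.mono Icc_subset_Ici_self).sub continuousOn_const).continuousWithinAt hτ).mono hDT
        |>.closure_le (hTD hτ) continuousWithinAt_const
          fun s hs ↦ not_lt.mp fun h ↦ hωV ⟨s, hs, h⟩
    rw [h0, sub_zero, le_div_iff₀' hζ] at hWτ
    exact ⟨τ, hτ, by linarith⟩
  calc ENNReal.ofReal (erf (K / (ζ * √(2 * T))))
      = ENNReal.ofReal (erf (a / √(2 * (T.toNNReal : ℝ)))) := by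
        rw [Real.coe_toNNReal _ hT.le, div_div]
    _ ≤ 1 - 2 * gaussianReal 0 T.toNNReal (Ici a) :=
        ENNReal.le_sub_of_add_le_right (by finiteness)
          (ofReal_erf_add_two_mul_gaussianReal_Ici_le_one (by simpa using hT) (div_pos hK hζ))
    _ ≤ 1 - P V := tsub_le_tsub_left hV 1
    _ ≤ P Vᶜ := tsub_le_iff_left.mpr (measure_univ (μ := P) ▸ measure_univ_le_add_compl V)
    _ ≤ _ := measure_mono_ae hVc
end

section
/- Fixed-time convergence of the comparison function: let c₁ > 0, c₂ > 0, γ₁ ∈ (0, 1), γ₂ > 1, and let W : [0, ∞) → ℝ be differentiable with derivative satisfying W′(t) ≤ −c₁·W(t)^{γ₁} − c₂·W(t)^{γ₂} at every t for which W(t) > 0. Then W(t) ≤ 0 for all t ≥ T_g, where T_g = 1/(c₁(1 − γ₁)) + 1/(c₂(γ₂ − 1)); in particular the settling time is bounded by T_g uniformly in the initial value W(0). -/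
/-!
While `W > 0`, separation of variables gives `d/dt (W^(1-γ) / (1-γ)) = W^(-γ) W' ≤ -c` for each
term `c W^γ` of the bound. For `γ₂ > 1` the quantity `W^(1-γ₂)` therefore grows at least linearly
from `0⁺`, so `W ≤ 1` after time `1 / (c₂ (γ₂ - 1))` whatever `W 0` is; for `γ₁ < 1` the quantity
`W^(1-γ₁)` then falls linearly from at most `1` and would reach `0` within a further
`1 / (c₁ (1 - γ₁))`. Since `W` cannot increase while positive, `W t > 0` would force `W > 0` on all
of `[0, t]`, where both estimates apply.
-/

open Set

section
variable {f : ℝ → ℝ} {a b c γ : ℝ}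

theorem pos_on_Icc_of_deriv_nonpos_of_pos (hf : ∀ x ∈ Icc a b, DifferentiableAt ℝ f x)
    (hf' : ∀ x ∈ Icc a b, 0 < f x → deriv f x ≤ 0) (hb : 0 < f b) :
    ∀ x ∈ Icc a b, 0 < f x := by
  intro x hx
  by_contra! hfx
  have hcont : ContinuousOn f (Icc a b) := fun y hy => (hf y hy).continuousAt.continuousWithinAt
  have hclosed : IsClosed (Icc x b ∩ f ⁻¹' Iic 0) :=
    (hcont.mono (Icc_subset_Icc_left hx.1)).preimage_isClosed_of_isClosed isClosed_Icc isClosed_Iic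
  -- the last zero-crossing `r` before `b`: past it `f` is positive, hence nonincreasing
  obtain ⟨r, ⟨⟨hxr, hrb⟩, hfr⟩, hr_last⟩ :=
    (isCompact_Icc.of_isClosed_subset hclosed inter_subset_left).exists_isGreatest
      ⟨x, ⟨le_rfl, hx.2⟩, hfx⟩
  have hr : Icc r b ⊆ Icc a b := Icc_subset_Icc_left (hx.1.trans hxr)
  have hpos : ∀ y ∈ Ioo r b, 0 < f y := fun y hy => by
    by_contra! hfy
    exact hy.1.not_ge (hr_last ⟨⟨hxr.trans hy.1.le, hy.2.le⟩, hfy⟩)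
  have hanti : AntitoneOn f (Icc r b) := by
    refine antitoneOn_of_deriv_nonpos (convex_Icc r b) (hcont.mono hr) ?_ ?_ <;> rw [interior_Icc]
    · exact fun y hy => (hf y (hr (Ioo_subset_Icc_self hy))).differentiableWithinAt
    · exact fun y hy => hf' y (hr (Ioo_subset_Icc_self hy)) (hpos y hy)
  exact (hanti ⟨le_rfl, hrb⟩ ⟨hrb, le_rfl⟩ hrb).not_gt (lt_of_le_of_lt hfr hb)

theorem rpow_one_sub_div_sub_le_of_deriv_le (hγ : γ ≠ 1) (hab : a ≤ b)
    (hf : ∀ x ∈ Icc a b, DifferentiableAt ℝ f x) (hpos : ∀ x ∈ Icc a b, 0 < f x)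
    (hf' : ∀ x ∈ Ioo a b, deriv f x ≤ -c * f x ^ γ) :
    f b ^ (1 - γ) / (1 - γ) - f a ^ (1 - γ) / (1 - γ) ≤ -c * (b - a) := by
  have hγ' : 1 - γ ≠ 0 := sub_ne_zero.mpr hγ.symm
  have hΦ : ∀ x ∈ Icc a b, HasDerivAt (fun y => f y ^ (1 - γ) / (1 - γ))
      (f x ^ (-γ) * deriv f x) x := fun x hx => by
    refine (((hf x hx).hasDerivAt.rpow_const (Or.inl (hpos x hx).ne')).div_const
      (1 - γ)).congr_deriv ?_
    rw [sub_sub_cancel_left]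
    field_simp
  refine (convex_Icc a b).image_sub_le_mul_sub_of_deriv_le
    (fun x hx => (hΦ x hx).continuousAt.continuousWithinAt) ?_ ?_ a (left_mem_Icc.2 hab) b
    (right_mem_Icc.2 hab) hab <;> rw [interior_Icc]
  · exact fun x hx => (hΦ x (Ioo_subset_Icc_self hx)).differentiableAt.differentiableWithinAt
  · intro x hx
    have hfx := hpos x (Ioo_subset_Icc_self hx)
    calc deriv (fun y => f y ^ (1 - γ) / (1 - γ)) x = f x ^ (-γ) * deriv f x :=
          (hΦ x (Ioo_subset_Icc_self hx)).deriv
      _ ≤ f x ^ (-γ) * (-c * f x ^ γ) := by gcongr; exact hf' x hx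
      _ = -c := by rw [mul_left_comm, ← Real.rpow_add hfx]; simp

theorem mul_sub_le_rpow_one_sub_of_deriv_le (hγ : 1 < γ) (hab : a ≤ b)
    (hf : ∀ x ∈ Icc a b, DifferentiableAt ℝ f x) (hpos : ∀ x ∈ Icc a b, 0 < f x)
    (hf' : ∀ x ∈ Ioo a b, deriv f x ≤ -c * f x ^ γ) :
    c * (γ - 1) * (b - a) ≤ f b ^ (1 - γ) := by
  have h := rpow_one_sub_div_sub_le_of_deriv_le hγ.ne' hab hf hpos hf'
  rw [div_sub_div_same, div_le_iff_of_neg (by linarith)] at h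
  have hfa : 0 < f a ^ (1 - γ) := Real.rpow_pos_of_pos (hpos a (left_mem_Icc.2 hab)) _
  linarith

theorem rpow_one_sub_le_sub_mul_of_deriv_le (hγ : γ < 1) (hab : a ≤ b)
    (hf : ∀ x ∈ Icc a b, DifferentiableAt ℝ f x) (hpos : ∀ x ∈ Icc a b, 0 < f x)
    (hf' : ∀ x ∈ Ioo a b, deriv f x ≤ -c * f x ^ γ) :
    f b ^ (1 - γ) ≤ f a ^ (1 - γ) - c * (1 - γ) * (b - a) := by
  have h := rpow_one_sub_div_sub_le_of_deriv_le hγ.ne hab hf hpos hf'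
  rw [div_sub_div_same, div_le_iff₀ (by linarith)] at h
  linarith
end

/-- Deterministic fixed-time stability comparison lemma: if `c₁, c₂ > 0`,
`γ₁ ∈ (0,1)`, `γ₂ > 1`, and `W : [0,∞) → ℝ` is differentiable with
`W'(t) ≤ -c₁ W(t)^{γ₁} - c₂ W(t)^{γ₂}` whenever `W(t) > 0`, then `W(t) ≤ 0` for
all `t ≥ T_g = 1/(c₁(1-γ₁)) + 1/(c₂(γ₂-1))`, uniformly in the initial value. -/
theorem fixed_time_comparison_lemma (c₁ c₂ γ₁ γ₂ : ℝ) (hc₁ : 0 < c₁) (hc₂ : 0 < c₂)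
    (hγ₁ : γ₁ ∈ Set.Ioo (0 : ℝ) 1) (hγ₂ : 1 < γ₂) (W : ℝ → ℝ)
    (hdiff : ∀ t : ℝ, 0 ≤ t → DifferentiableAt ℝ W t)
    (hderiv : ∀ t : ℝ, 0 ≤ t → 0 < W t →
      deriv W t ≤ -c₁ * W t ^ γ₁ - c₂ * W t ^ γ₂) :
    ∀ t : ℝ, 1 / (c₁ * (1 - γ₁)) + 1 / (c₂ * (γ₂ - 1)) ≤ t → W t ≤ 0 := by
  intro t ht
  by_contra! hWt
  have hγ₁' : 0 < 1 - γ₁ := sub_pos.2 hγ₁.2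
  have hγ₂' : 0 < γ₂ - 1 := sub_pos.2 hγ₂
  set T₁ := 1 / (c₂ * (γ₂ - 1))
  have hT₁ : 0 ≤ T₁ := by positivity
  have hT₁t : T₁ ≤ t := by
    have : 0 ≤ 1 / (c₁ * (1 - γ₁)) := by positivity
    linarith
  have hT₂ : 1 ≤ c₁ * (1 - γ₁) * (t - T₁) := by
    rw [← div_le_iff₀' (by positivity)]; linarith
  have hderiv' : ∀ x, 0 ≤ x → 0 < W x →
      deriv W x ≤ -c₁ * W x ^ γ₁ ∧ deriv W x ≤ -c₂ * W x ^ γ₂ ∧ deriv W x ≤ 0 := by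
    intro x hx hWx
    have : 0 < c₁ * W x ^ γ₁ := by positivity
    have : 0 < c₂ * W x ^ γ₂ := by positivity
    have := hderiv x hx hWx
    refine ⟨?_, ?_, ?_⟩ <;> linarith
  have hW : ∀ x ∈ Icc 0 t, 0 < W x := pos_on_Icc_of_deriv_nonpos_of_pos
    (fun x hx => hdiff x hx.1) (fun x hx hWx => (hderiv' x hx.1 hWx).2.2) hWt
  have hWT₁ : W T₁ ≤ 1 := by
    have h := mul_sub_le_rpow_one_sub_of_deriv_le hγ₂ hT₁ (fun x hx => hdiff x hx.1)
      (fun x hx => hW x ⟨hx.1, hx.2.trans hT₁t⟩)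
      (fun x hx => (hderiv' x hx.1.le (hW x ⟨hx.1.le, hx.2.le.trans hT₁t⟩)).2.1)
    rw [sub_zero, mul_one_div_cancel (by positivity)] at h
    by_contra! h'
    exact (Real.rpow_lt_one_of_one_lt_of_neg h' (by linarith)).not_ge h
  have h := rpow_one_sub_le_sub_mul_of_deriv_le hγ₁.2 hT₁t (fun x hx => hdiff x (hT₁.trans hx.1))
    (fun x hx => hW x ⟨hT₁.trans hx.1, hx.2⟩)
    (fun x hx => (hderiv' x (hT₁.trans hx.1.le) (hW x ⟨hT₁.trans hx.1.le, hx.2.le⟩)).1)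
  have h₁ : W T₁ ^ (1 - γ₁) ≤ 1 := Real.rpow_le_one (hW T₁ ⟨hT₁, hT₁t⟩).le hWT₁ hγ₁'.le
  have h₀ : 0 < W t ^ (1 - γ₁) := Real.rpow_pos_of_pos hWt _
  linarith
end
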